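/- Let n = 2^{α_1} p_2^{α_2}···p_r^{α_r} with odd primes p_2 < ··· < p_r. If x is the unique involution of C_n, then |N(x)| = (2^{α_1} − 1)·p_2^{α_2}···p_r^{α_r}, and if y has order 2^{α_1} then |N([y])| = 2^{α_1−1}·p_2^{α_2}···p_r^{α_r}; hence |N(x)| − |N([y])| = (2^{α_1−1} − 1)·p_2^{α_2}···p_r^{α_r}, which is positive whenever α_1 > 1. -/

import Mathlib

/-!
In a finite cyclic group `⟨z⟩` is the kernel of `v ↦ v ^ orderOf z`, so `u ∈ ⟨z⟩` iff
`orderOf u ∣ orderOf z`: the power graph only sees orders. The closed neighbourhood of an element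
of order `d` is then the set of elements whose order divides `d` or is divisible by `d`, of size
`d + #{v | d ∣ orderOf v} - φ d` by inclusion–exclusion. For `n = p ^ a * m` with `p ∤ m` and
`1 ≤ k ≤ a`, the elements with `p ^ k ∣ orderOf v` are exactly those outside the subgroup of order
`p ^ (k - 1) * m`, which leaves `n - p ^ (k - 1) * m` of them. Taking `p = 2`, `d = 2` and
`d = 2 ^ a` gives both neighbourhood sizes.
-/

/-- The power graph of a group: distinct vertices are adjacent iff
one is a power of the other. -/
def powerGraph (G : Type*) [Group G] : SimpleGraph G where
  Adj x y := x ≠ y ∧ (x ∈ Subgroup.zpowers y ∨ y ∈ Subgroup.zpowers x)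
  symm := ⟨fun x y ⟨h1, h2⟩ => ⟨h1.symm, h2.symm⟩⟩
  loopless := ⟨fun x ⟨h, _⟩ => h rfl⟩

/-- `v` lies in a connected component containing a cycle. -/
def InCyclicComp {V : Type*} (Γ : SimpleGraph V) (v : V) : Prop :=
  ∃ w, Γ.Reachable v w ∧ ∃ c : Γ.Walk w w, c.IsCycle

/-- `S` is a cyclic vertex cutset: `Γ - S` is disconnected with at least two
components containing cycles. -/
def IsCyclicCutset {V : Type*} (Γ : SimpleGraph V) (S : Set V) : Prop :=
  ∃ u v : ↥(Sᶜ), ¬ (Γ.induce Sᶜ).Reachable u v ∧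
    InCyclicComp (Γ.induce Sᶜ) u ∧ InCyclicComp (Γ.induce Sᶜ) v

/-- A graph is cyclically separable if it has a cyclic vertex cutset. -/
def CyclicallySeparable {V : Type*} (Γ : SimpleGraph V) : Prop :=
  ∃ S : Set V, IsCyclicCutset Γ S

/-- Vertex connectivity: the least number of vertices whose deletion
disconnects the graph or reduces it to at most one vertex. -/
noncomputable def vertexConn {V : Type*} (Γ : SimpleGraph V) : ℕ :=
  sInf {k | ∃ S : Set V, S.ncard = k ∧
    (¬ (Γ.induce Sᶜ).Connected ∨ Sᶜ.Subsingleton)}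

/-- Cyclic vertex connectivity: the least cardinality of a cyclic vertex
cutset, `∞` if there is none. -/
noncomputable def cyclicVertexConn {V : Type*} (Γ : SimpleGraph V) : ℕ∞ :=
  sInf {k : ℕ∞ | ∃ S : Set V, IsCyclicCutset Γ S ∧ k = (S.ncard : ℕ∞)}

/-- `genClass x` is `[x]`, the set of generators of `⟨x⟩`. -/
def genClass {G : Type*} [Group G] (x : G) : Set G :=
  {y | Subgroup.zpowers y = Subgroup.zpowers x}

/-- Neighbourhood of a set of vertices. -/
def setNbhd {V : Type*} (Γ : SimpleGraph V) (A : Set V) : Set V :=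
  {v | v ∉ A ∧ ∃ a ∈ A, Γ.Adj v a}

open Subgroup

theorem Nat.pow_dvd_iff_not_dvd_pow_sub_one_mul {p a m k t : ℕ} (hp : p.Prime) (hpm : ¬ p ∣ m)
    (ht : t ∣ p ^ a * m) (hk : 1 ≤ k) : p ^ k ∣ t ↔ ¬ t ∣ p ^ (k - 1) * m := by
  have hpow : p ^ k = p ^ (k - 1) * p := by rw [← pow_succ, Nat.sub_add_cancel hk]
  constructor
  · intro hpk htm
    rw [hpow] at hpk
    exact hpm (Nat.dvd_of_mul_dvd_mul_left (pow_pos hp.pos _) (hpk.trans htm))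
  · intro htm
    by_contra hpk
    obtain ⟨t₁, t₂, ht₁, ht₂, rfl⟩ := dvd_mul.mp ht
    obtain ⟨j, -, rfl⟩ := (Nat.dvd_prime_pow hp).mp ht₁
    have hjk : j ≤ k - 1 := by
      by_contra! hj
      exact hpk ((pow_dvd_pow p (by omega)).trans (dvd_mul_right _ _))
    exact htm (mul_dvd_mul (pow_dvd_pow p hjk) ht₂)

theorem setOf_orderOf_dvd_eq_ker_powMonoidHom {G : Type*} [CommGroup G] (k : ℕ) :
    {v : G | orderOf v ∣ k} = (powMonoidHom k : G →* G).ker := by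
  ext v
  simp [orderOf_dvd_iff_pow_eq_one]

section CyclicGroup

variable {G : Type*} [CommGroup G] [IsCyclic G] [Finite G]

theorem IsCyclic.ncard_setOf_orderOf_dvd {k : ℕ} (hk : k ∣ Nat.card G) :
    {v : G | orderOf v ∣ k}.ncard = k := by
  rw [setOf_orderOf_dvd_eq_ker_powMonoidHom, ← Nat.card_coe_set_eq, SetLike.coe_sort_coe,
    IsCyclic.card_powMonoidHom_ker, Nat.gcd_eq_right hk]

theorem IsCyclic.zpowers_eq_ker {z : G} : zpowers z = (powMonoidHom (orderOf z) : G →* G).ker :=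
  eq_of_le_of_card_ge (zpowers_le.mpr (by simp [pow_orderOf_eq_one]))
    (by rw [IsCyclic.card_powMonoidHom_ker, Nat.card_zpowers,
      Nat.gcd_eq_right (orderOf_dvd_natCard z)])

theorem IsCyclic.mem_zpowers_iff_orderOf_dvd {u z : G} :
    u ∈ zpowers z ↔ orderOf u ∣ orderOf z := by
  rw [IsCyclic.zpowers_eq_ker, ← SetLike.mem_coe, ← setOf_orderOf_dvd_eq_ker_powMonoidHom]
  rfl

theorem IsCyclic.zpowers_eq_zpowers_iff {u z : G} :
    zpowers u = zpowers z ↔ orderOf u = orderOf z := by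
  refine ⟨fun h => by rw [← Nat.card_zpowers, h, Nat.card_zpowers], fun h => ?_⟩
  rw [IsCyclic.zpowers_eq_ker, IsCyclic.zpowers_eq_ker, h]

theorem IsCyclic.ncard_setOf_orderOf_eq {d : ℕ} (hd : d ∣ Nat.card G) :
    {v : G | orderOf v = d}.ncard = d.totient := by
  have := Fintype.ofFinite G
  classical
  rw [← IsCyclic.card_orderOf_eq_totient (α := G) (by rwa [← Nat.card_eq_fintype_card]),
    ← Set.ncard_coe_finset, Finset.coe_filter]
  simp only [Finset.mem_univ, true_and]

theorem IsCyclic.ncard_setOf_pow_dvd_orderOf_add {p a m k : ℕ} (hp : p.Prime) (hpm : ¬ p ∣ m)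
    (hG : Nat.card G = p ^ a * m) (hk : 1 ≤ k) (hka : k ≤ a) :
    {v : G | p ^ k ∣ orderOf v}.ncard + p ^ (k - 1) * m = Nat.card G := by
  have hcompl : {v : G | p ^ k ∣ orderOf v} = {v : G | orderOf v ∣ p ^ (k - 1) * m}ᶜ := by
    ext v
    exact Nat.pow_dvd_iff_not_dvd_pow_sub_one_mul hp hpm (hG ▸ orderOf_dvd_natCard v) hk
  have hdvd : p ^ (k - 1) * m ∣ Nat.card G := hG ▸ mul_dvd_mul_right (pow_dvd_pow p (by omega)) m
  rw [hcompl, ← Set.ncard_add_ncard_compl {v : G | orderOf v ∣ p ^ (k - 1) * m},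
    IsCyclic.ncard_setOf_orderOf_dvd hdvd, add_comm]

end CyclicGroup

/-- In a finite cyclic group, `orderComparable G (orderOf x)` is the closed neighbourhood of `x` in
the power graph. -/
def orderComparable (G : Type*) [Monoid G] (d : ℕ) : Set G :=
  {v | orderOf v ∣ d ∨ d ∣ orderOf v}

section PowerGraph

variable {G : Type*} [CommGroup G] [IsCyclic G] [Finite G]

theorem powerGraph_adj_iff_of_isCyclic {u v : G} :
    (powerGraph G).Adj u v ↔ u ≠ v ∧ (orderOf u ∣ orderOf v ∨ orderOf v ∣ orderOf u) := by
  simp only [powerGraph, IsCyclic.mem_zpowers_iff_orderOf_dvd]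

theorem genClass_eq_setOf_orderOf_eq (y : G) : genClass y = {v | orderOf v = orderOf y} :=
  Set.ext fun _ => IsCyclic.zpowers_eq_zpowers_iff

theorem neighborSet_powerGraph_eq (x : G) :
    (powerGraph G).neighborSet x = orderComparable G (orderOf x) \ {x} := by
  ext v
  simp only [SimpleGraph.mem_neighborSet, powerGraph_adj_iff_of_isCyclic, orderComparable,
    Set.mem_sdiff, Set.mem_ofPred_eq, Set.mem_singleton_iff]
  constructor
  · rintro ⟨hne, h⟩
    exact ⟨h.symm, Ne.symm hne⟩
  · rintro ⟨h, hne⟩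
    exact ⟨Ne.symm hne, h.symm⟩

theorem setNbhd_genClass_eq (y : G) :
    setNbhd (powerGraph G) (genClass y) = orderComparable G (orderOf y) \ genClass y := by
  ext v
  simp only [setNbhd, genClass_eq_setOf_orderOf_eq, powerGraph_adj_iff_of_isCyclic,
    orderComparable, Set.mem_sdiff, Set.mem_ofPred_eq]
  constructor
  · rintro ⟨hv, w, hw, -, h⟩
    exact ⟨hw ▸ h, hv⟩
  · rintro ⟨h, hv⟩
    exact ⟨hv, y, rfl, fun hvy => hv (hvy ▸ rfl), h⟩

theorem ncard_neighborSet_powerGraph_add_one (x : G) :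
    ((powerGraph G).neighborSet x).ncard + 1 = (orderComparable G (orderOf x)).ncard := by
  rw [neighborSet_powerGraph_eq]
  exact Set.ncard_sdiff_singleton_add_one (Or.inl dvd_rfl)

theorem ncard_setNbhd_genClass_add_totient (y : G) :
    (setNbhd (powerGraph G) (genClass y)).ncard + (orderOf y).totient
      = (orderComparable G (orderOf y)).ncard := by
  have hsub : genClass y ⊆ orderComparable G (orderOf y) := by
    rw [genClass_eq_setOf_orderOf_eq]
    exact fun v hv => Or.inl hv.dvd
  rw [setNbhd_genClass_eq, ← Set.ncard_sdiff_add_ncard_of_subset hsub, genClass_eq_setOf_orderOf_eq,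
    IsCyclic.ncard_setOf_orderOf_eq (orderOf_dvd_natCard y)]

theorem ncard_orderComparable_add_totient {d : ℕ} (hd : d ∣ Nat.card G) :
    (orderComparable G d).ncard + d.totient = d + {v : G | d ∣ orderOf v}.ncard := by
  have hinter : {v : G | orderOf v ∣ d} ∩ {v | d ∣ orderOf v} = {v | orderOf v = d} := by
    ext v
    exact ⟨fun h => Nat.dvd_antisymm h.1 h.2, fun h => ⟨h.dvd, h.symm.dvd⟩⟩
  rw [orderComparable, Set.ofPred_or, ← IsCyclic.ncard_setOf_orderOf_eq hd, ← hinter,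
    Set.ncard_union_add_ncard_inter, IsCyclic.ncard_setOf_orderOf_dvd hd]

theorem ncard_neighborSet_powerGraph_add_of_orderOf_eq_prime {p a m : ℕ} (hp : p.Prime)
    (hpm : ¬ p ∣ m) (hG : Nat.card G = p ^ a * m) (ha : 1 ≤ a) {x : G} (hx : orderOf x = p) :
    ((powerGraph G).neighborSet x).ncard + m = Nat.card G := by
  have hN := ncard_neighborSet_powerGraph_add_one x
  have hC := ncard_orderComparable_add_totient (hx ▸ orderOf_dvd_natCard x)
  have hD := IsCyclic.ncard_setOf_pow_dvd_orderOf_add hp hpm hG le_rfl ha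
  rw [hx] at hN
  rw [pow_one, Nat.sub_self, pow_zero, one_mul] at hD
  rw [Nat.totient_prime hp] at hC
  have := hp.one_lt
  omega

theorem ncard_setNbhd_genClass_add_of_orderOf_eq_prime_pow {p a m : ℕ} (hp : p.Prime)
    (hpm : ¬ p ∣ m) (hG : Nat.card G = p ^ a * m) (ha : 1 ≤ a) {y : G} (hy : orderOf y = p ^ a) :
    (setNbhd (powerGraph G) (genClass y)).ncard + 2 * (p ^ a).totient + p ^ (a - 1) * m
      = p ^ a + Nat.card G := by
  have hN := ncard_setNbhd_genClass_add_totient y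
  have hC := ncard_orderComparable_add_totient (hy ▸ orderOf_dvd_natCard y)
  have hD := IsCyclic.ncard_setOf_pow_dvd_orderOf_add hp hpm hG ha le_rfl
  rw [hy] at hN
  omega

end PowerGraph

/-- Neighbourhood sizes for the unique involution and an element of maximal
2-power order in C_n, n = 2^a · m with m odd. -/
theorem stmt12 (a m n : ℕ) (ha : 1 ≤ a) (hm : Odd m) (hn : n = 2 ^ a * m)
    [NeZero n] (x y : Multiplicative (ZMod n))
    (hx : orderOf x = 2) (hy : orderOf y = 2 ^ a) :
    ((powerGraph (Multiplicative (ZMod n))).neighborSet x).ncard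
        = (2 ^ a - 1) * m ∧
    (setNbhd (powerGraph (Multiplicative (ZMod n))) (genClass y)).ncard
        = 2 ^ (a - 1) * m ∧
    ((powerGraph (Multiplicative (ZMod n))).neighborSet x).ncard
        - (setNbhd (powerGraph (Multiplicative (ZMod n))) (genClass y)).ncard
      = (2 ^ (a - 1) - 1) * m ∧
    (1 < a → 0 < (2 ^ (a - 1) - 1) * m) := by
  have hG : Nat.card (Multiplicative (ZMod n)) = 2 ^ a * m := by
    rw [Nat.card_eq_fintype_card, Fintype.card_multiplicative, ZMod.card, hn]
  have hodd : ¬ 2 ∣ m := Nat.two_dvd_ne_zero.mpr (Nat.odd_iff.mp hm)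
  have hNx := ncard_neighborSet_powerGraph_add_of_orderOf_eq_prime Nat.prime_two hodd hG ha hx
  have hNy := ncard_setNbhd_genClass_add_of_orderOf_eq_prime_pow Nat.prime_two hodd hG ha hy
  rw [Nat.totient_prime_pow Nat.prime_two ha, Nat.add_one_sub_one, mul_one] at hNy
  have h2a : 2 ^ a = 2 * 2 ^ (a - 1) := by rw [← pow_succ', Nat.sub_add_cancel ha]
  rw [hG] at hNx hNy
  have hx_card : ((powerGraph (Multiplicative (ZMod n))).neighborSet x).ncard
      = (2 ^ a - 1) * m := by
    rw [Nat.sub_mul, one_mul]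
    omega
  have hy_card : (setNbhd (powerGraph (Multiplicative (ZMod n))) (genClass y)).ncard
      = 2 ^ (a - 1) * m := by
    rw [h2a, mul_assoc] at hNy
    omega
  refine ⟨hx_card, hy_card, ?_, fun ha' => ?_⟩
  · rw [hx_card, hy_card, ← Nat.sub_mul, h2a]
    congr 1
    omega
  · exact Nat.mul_pos (Nat.sub_pos_of_lt (Nat.one_lt_two_pow (by omega))) hm.pos
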